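/- arXiv:2202.13597 — 2 statements merged into one kernel-verified Lean document; each statement's English description precedes it below -/
import Mathlib

section
/- Let F ∼ N(μ, σx²) and ε ∼ N(0, σn²) be independent, and let f* be a real number with Y = F + ε. Then the conditional density of Y given the event {F ≤ f*} is p(y) = N(y; μ, σ₊²) · Ψ(g(y)) / Ψ((f* − μ)/σx), where g(y) = (σ₊² f* − σn² μ − σx² y)/(σx σn σ₊) and σ₊² = σx² + σn². -/
open MeasureTheory ProbabilityTheory Real

/-- Gaussian density N(z; m, s²). -/
noncomputable def gauss (m s2 z : ℝ) : ℝ :=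
  (Real.sqrt (2 * Real.pi * s2))⁻¹ * Real.exp (-(z - m) ^ 2 / (2 * s2))

/-- Standard Gaussian density ψ. -/
noncomputable def stdPdf (t : ℝ) : ℝ := gauss 0 1 t

/-- Standard Gaussian CDF Ψ. -/
noncomputable def stdCdf (t : ℝ) : ℝ := ∫ u in Set.Iic t, stdPdf u

/-!
Conditioning on `{F ≤ f*}` restricts the law of `F` to `(-∞, f*]` and rescales by
`1 / Ψ((f* - μ)/σx)`; by independence, the law of `F + ε` under the restricted measure is the
convolution of that restricted Gaussian with `N(0, σn²)`. Its density at `y` is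
`∫_{x ≤ f*} N(x; μ, σx²) N(y; x, σn²) dx`, and completing the square in `x` factors the integrand
as `N(y; μ, σ₊²)` times the Gaussian density in `x` with mean `(σn² μ + σx² y)/σ₊²` and variance
`σx² σn²/σ₊²`, whose mass on `(-∞, f*]` is `Ψ(g(y))`.
-/

open scoped NNReal ENNReal

theorem ProbabilityTheory.IndepFun.map_add_cond_preimage_eq_conv {Ω M : Type*}
    [MeasurableSpace Ω] [AddMonoid M] [MeasurableSpace M] [MeasurableAdd₂ M]
    {P : Measure Ω} [IsFiniteMeasure P] {X Y : Ω → M}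
    (hX : Measurable X) (hY : Measurable Y) (hXY : IndepFun X Y P) {A : Set M}
    (hA : MeasurableSet A) :
    (P[|X ⁻¹' A]).map (X + Y) = (P (X ⁻¹' A))⁻¹ • ((P.map X).restrict A ∗ P.map Y) := by
  have hpre : X ⁻¹' A = (fun ω ↦ (X ω, Y ω)) ⁻¹' (A ×ˢ Set.univ) := by ext; simp
  have hsum : X + Y = (fun p : M × M ↦ p.1 + p.2) ∘ fun ω ↦ (X ω, Y ω) := rfl
  rw [ProbabilityTheory.cond, Measure.map_smul, hsum,
    ← Measure.map_map measurable_add (hX.prodMk hY), hpre,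
    ← Measure.restrict_map (hX.prodMk hY) (hA.prod .univ),
    (indepFun_iff_map_prod_eq_prod_map_map hX.aemeasurable hY.aemeasurable).mp hXY,
    ← Measure.prod_restrict, Measure.restrict_univ, ← hpre]
  rfl

lemma gaussianPDFReal_eq_gauss (m : ℝ) (v : ℝ≥0) : gaussianPDFReal m v = gauss m v := rfl

lemma gauss_nonneg (m v z : ℝ) : 0 ≤ gauss m v z := by
  unfold gauss; positivity

lemma continuous_gauss (m v : ℝ) : Continuous (gauss m v) := by
  unfold gauss; fun_prop

lemma gauss_zero_neg_add (v x y : ℝ) : gauss 0 v (-x + y) = gauss x v y := by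
  simp only [gauss]; ring_nf

lemma gauss_mul_gauss {a b : ℝ} (ha : 0 < a) (hb : 0 < b) (m x y : ℝ) :
    gauss m a x * gauss x b y =
      gauss m (a + b) y * gauss ((b * m + a * y) / (a + b)) (a * b / (a + b)) x := by
  unfold gauss
  rw [mul_mul_mul_comm, ← Real.exp_add, mul_mul_mul_comm _ (Real.exp _), ← Real.exp_add,
    ← mul_inv, ← mul_inv, ← Real.sqrt_mul (by positivity), ← Real.sqrt_mul (by positivity)]
  congr 2
  · field_simp
  · field_simp
    ring

lemma stdPdf_eq_gaussianPDFReal : stdPdf = gaussianPDFReal 0 1 := by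
  ext; simp [stdPdf, gaussianPDFReal_eq_gauss]

lemma stdCdf_pos (t : ℝ) : 0 < stdCdf t := by
  rw [stdCdf, stdPdf_eq_gaussianPDFReal, setIntegral_pos_iff_support_of_nonneg_ae
    (.of_forall fun u => gaussianPDFReal_nonneg 0 1 u)
    (integrable_gaussianPDFReal 0 1).integrableOn]
  have hsupp : Function.support (gaussianPDFReal 0 1) = Set.univ :=
    Set.eq_univ_of_forall fun u => (gaussianPDFReal_pos 0 1 u one_ne_zero).ne'
  simp [hsupp]

lemma gaussianReal_Iic_eq_ofReal_stdCdf (m : ℝ) {s : ℝ} (hs : 0 < s) (a : ℝ) :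
    gaussianReal m ((s ^ 2).toNNReal) (Set.Iic a) = ENNReal.ofReal (stdCdf ((a - m) / s)) := by
  have hstd : gaussianReal m ((s ^ 2).toNNReal)
      = ((gaussianReal 0 1).map (s * ·)).map (· + m) := by
    rw [gaussianReal_map_const_mul, gaussianReal_map_add_const, mul_zero, zero_add, mul_one]
    congr
    ext
    simp [Real.coe_toNNReal _ (sq_nonneg s)]
  have hpre : (s * ·) ⁻¹' ((· + m) ⁻¹' Set.Iic a) = Set.Iic ((a - m) / s) := by
    ext x; simp [le_div_iff₀ hs, le_sub_iff_add_le, mul_comm]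
  rw [hstd, Measure.map_apply (measurable_add_const m) measurableSet_Iic,
    Measure.map_apply (measurable_const_mul s) (measurable_add_const m measurableSet_Iic), hpre,
    gaussianReal_of_var_ne_zero 0 one_ne_zero, withDensity_apply _ measurableSet_Iic, stdCdf,
    stdPdf_eq_gaussianPDFReal,
    ofReal_integral_eq_lintegral_ofReal (integrable_gaussianPDFReal 0 1).integrableOn
      (.of_forall fun u => gaussianPDFReal_nonneg 0 1 u)]
  rfl

lemma setLIntegral_Iic_gauss (m : ℝ) {s : ℝ} (hs : 0 < s) (a : ℝ) :
    ∫⁻ x in Set.Iic a, ENNReal.ofReal (gauss m (s ^ 2) x) =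
      ENNReal.ofReal (stdCdf ((a - m) / s)) := by
  have hv : (s ^ 2).toNNReal ≠ 0 := by simpa using hs.ne'
  rw [← gaussianReal_Iic_eq_ofReal_stdCdf m hs, gaussianReal_of_var_ne_zero _ hv,
    withDensity_apply _ measurableSet_Iic]
  simp only [gaussianPDF_def, gaussianPDFReal_eq_gauss, Real.coe_toNNReal _ (sq_nonneg s)]

lemma setLIntegral_Iic_gauss_mul_gauss {σx σn : ℝ} (hσx : 0 < σx) (hσn : 0 < σn)
    (m c y : ℝ) :
    ∫⁻ x in Set.Iic c, ENNReal.ofReal (gauss m (σx ^ 2) x * gauss x (σn ^ 2) y) =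
      ENNReal.ofReal (gauss m (σx ^ 2 + σn ^ 2) y *
        stdCdf (((σx ^ 2 + σn ^ 2) * c - σn ^ 2 * m - σx ^ 2 * y) /
          (σx * σn * Real.sqrt (σx ^ 2 + σn ^ 2)))) := by
  have hv : 0 < σx ^ 2 + σn ^ 2 := by positivity
  set s := σx * σn / Real.sqrt (σx ^ 2 + σn ^ 2) with hs_def
  have hs : 0 < s := by positivity
  have hs2 : σx ^ 2 * σn ^ 2 / (σx ^ 2 + σn ^ 2) = s ^ 2 := by
    rw [hs_def, div_pow, Real.sq_sqrt hv.le, mul_pow]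
  have harg : (c - (σn ^ 2 * m + σx ^ 2 * y) / (σx ^ 2 + σn ^ 2)) / s =
      ((σx ^ 2 + σn ^ 2) * c - σn ^ 2 * m - σx ^ 2 * y) /
        (σx * σn * Real.sqrt (σx ^ 2 + σn ^ 2)) := by
    have hsqrt : Real.sqrt (σx ^ 2 + σn ^ 2) ^ 2 = σx ^ 2 + σn ^ 2 := Real.sq_sqrt hv.le
    have hsqrt_pos : 0 < Real.sqrt (σx ^ 2 + σn ^ 2) := Real.sqrt_pos.mpr hv
    rw [hs_def]
    field_simp
    rw [hsqrt]
    ring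
  simp_rw [gauss_mul_gauss (pow_pos hσx 2) (pow_pos hσn 2), hs2,
    ENNReal.ofReal_mul (gauss_nonneg _ _ _)]
  rw [lintegral_const_mul _ (continuous_gauss _ _).measurable.ennreal_ofReal,
    setLIntegral_Iic_gauss _ hs, harg]

lemma gaussianReal_restrict_Iic_conv_gaussianReal {σx σn : ℝ} (hσx : 0 < σx) (hσn : 0 < σn)
    (m c : ℝ) :
    (gaussianReal m (σx ^ 2).toNNReal).restrict (Set.Iic c) ∗ gaussianReal 0 (σn ^ 2).toNNReal =
      volume.withDensity fun y => ENNReal.ofReal (gauss m (σx ^ 2 + σn ^ 2) y *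
        stdCdf (((σx ^ 2 + σn ^ 2) * c - σn ^ 2 * m - σx ^ 2 * y) /
          (σx * σn * Real.sqrt (σx ^ 2 + σn ^ 2)))) := by
  have hvx : (σx ^ 2).toNNReal ≠ 0 := by simpa using hσx.ne'
  have hvn : (σn ^ 2).toNNReal ≠ 0 := by simpa using hσn.ne'
  rw [gaussianReal_of_var_ne_zero _ hvx, gaussianReal_of_var_ne_zero _ hvn,
    restrict_withDensity measurableSet_Iic, ← withDensity_indicator measurableSet_Iic,
    conv_withDensity_eq_lconvolution ((measurable_gaussianPDF _ _).indicator measurableSet_Iic)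
      (measurable_gaussianPDF _ _)]
  congr 1
  ext y
  rw [lconvolution_def, ← setLIntegral_Iic_gauss_mul_gauss hσx hσn,
    ← lintegral_indicator measurableSet_Iic]
  congr 1
  ext x
  by_cases hx : x ∈ Set.Iic c
  · simp only [Set.indicator_of_mem hx, gaussianPDF_def, gaussianPDFReal_eq_gauss,
      Real.coe_toNNReal _ (sq_nonneg _), gauss_zero_neg_add,
      ENNReal.ofReal_mul (gauss_nonneg _ _ _)]
  · simp [Set.indicator_of_notMem hx]

theorem stmt_2 {Ω : Type*} [MeasurableSpace Ω] (P : Measure Ω) [IsProbabilityMeasure P]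
    (F ε : Ω → ℝ) (hFm : Measurable F) (hεm : Measurable ε)
    (μ σx σn fstar : ℝ) (hσx : 0 < σx) (hσn : 0 < σn)
    (hF : Measure.map F P = gaussianReal μ ((σx ^ 2).toNNReal))
    (hε : Measure.map ε P = gaussianReal 0 ((σn ^ 2).toNNReal))
    (hind : IndepFun F ε P) :
    Measure.map (fun ω => F ω + ε ω) (ProbabilityTheory.cond P (F ⁻¹' Set.Iic fstar)) =
      MeasureTheory.volume.withDensity (fun y => ENNReal.ofReal
        (gauss μ (σx ^ 2 + σn ^ 2) y *
          stdCdf (((σx ^ 2 + σn ^ 2) * fstar - σn ^ 2 * μ - σx ^ 2 * y) /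
            (σx * σn * Real.sqrt (σx ^ 2 + σn ^ 2))) /
          stdCdf ((fstar - μ) / σx))) := by
  have hPA : P (F ⁻¹' Set.Iic fstar) = ENNReal.ofReal (stdCdf ((fstar - μ) / σx)) := by
    rw [← Measure.map_apply hFm measurableSet_Iic, hF, gaussianReal_Iic_eq_ofReal_stdCdf μ hσx]
  have hc := stdCdf_pos ((fstar - μ) / σx)
  rw [show (fun ω => F ω + ε ω) = F + ε from rfl,
    hind.map_add_cond_preimage_eq_conv hFm hεm measurableSet_Iic, hF, hε, hPA,
    gaussianReal_restrict_Iic_conv_gaussianReal hσx hσn,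
    ← withDensity_smul' _ _ (ENNReal.inv_ne_top.mpr (ENNReal.ofReal_pos.mpr hc).ne')]
  congr 1
  ext y
  rw [Pi.smul_apply, smul_eq_mul, ENNReal.ofReal_div_of_pos hc, ENNReal.div_eq_inv_mul]
end

section
/- Let Y ∼ N(μ, σ₊²) and let w(y) = Ψ(g(y))/Ψ(h) with g(y) = (σ₊² f* − σn² μ − σx² y)/(σx σn σ₊), h = (f* − μ)/σx, σ₊² = σx² + σn², σx, σn > 0. Then E[w(Y)] = 1. -/
open MeasureTheory ProbabilityTheory Real

/-!
Write `Ψ = cdf N(0,1)`. Standardizing `Y = μ + σ₊ U` turns `g(Y)` into `(h - a U) / b` with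
`a = σx / σ₊`, `b = σn / σ₊`, so `a² + b² = 1`. For `Z` standard Gaussian independent of `U`,
`𝔼 Ψ((h - a U) / b) = P(a U + b Z ≤ h)`, and `a U + b Z` is again standard Gaussian
(convolution of `N(0, a²)` and `N(0, b²)`), so this probability is `Ψ(h)`.
-/

open scoped NNReal

lemma integral_cdf_sub_eq_cdf_conv (μ ν : Measure ℝ) [IsProbabilityMeasure μ]
    [IsProbabilityMeasure ν] (x : ℝ) :
    ∫ y, cdf ν (x - y) ∂μ = cdf (μ ∗ ν) x := by
  have h_shift (y : ℝ) : (fun z => (Set.Iic x).indicator (1 : ℝ → ℝ) (y + z))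
      = (Set.Iic (x - y)).indicator 1 := by
    ext z
    simp only [Set.indicator_apply, Set.mem_Iic, le_sub_iff_add_le', Pi.one_apply]
  rw [cdf_eq_real, ← integral_indicator_one measurableSet_Iic,
    integral_conv ((integrable_const 1).indicator measurableSet_Iic)]
  simp_rw [h_shift, integral_indicator_one measurableSet_Iic, cdf_eq_real]

lemma cdf_map_const_mul (μ : Measure ℝ) [IsProbabilityMeasure μ] {c : ℝ} (hc : 0 < c)
    (x : ℝ) : cdf (μ.map (c * ·)) x = cdf μ (x / c) := by
  have : IsProbabilityMeasure (μ.map (c * ·)) :=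
    Measure.isProbabilityMeasure_map (measurable_const_mul c).aemeasurable
  rw [cdf_eq_real, cdf_eq_real, map_measureReal_apply (measurable_const_mul c) measurableSet_Iic]
  congr 1
  ext z
  simp [le_div_iff₀ hc, mul_comm]

lemma gaussianReal_zero_one_map_const_mul (c : ℝ) :
    (gaussianReal 0 1).map (c * ·) = gaussianReal 0 (.mk (c ^ 2) (sq_nonneg c)) := by
  rw [gaussianReal_map_const_mul, mul_zero, mul_one]

lemma cdf_gaussianReal_pos (m : ℝ) {v : ℝ≥0} (hv : v ≠ 0) (x : ℝ) :
    0 < cdf (gaussianReal m v) x := by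
  rw [cdf_eq_real, measureReal_def, ENNReal.toReal_pos_iff]
  refine ⟨pos_iff_ne_zero.2 fun h => ?_, measure_lt_top _ _⟩
  simpa using gaussianReal_absolutelyContinuous' m hv h

lemma integral_cdf_gaussianReal_affine {a b : ℝ} (hb : 0 < b) (hab : a ^ 2 + b ^ 2 = 1)
    (x : ℝ) :
    ∫ y, cdf (gaussianReal 0 1) ((x - a * y) / b) ∂gaussianReal 0 1
      = cdf (gaussianReal 0 1) x := by
  have h_conv : gaussianReal 0 (.mk (a ^ 2) (sq_nonneg a))
      ∗ gaussianReal 0 (.mk (b ^ 2) (sq_nonneg b)) = gaussianReal 0 1 := by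
    rw [gaussianReal_conv_gaussianReal, add_zero]
    congr 1
    exact NNReal.eq hab
  calc ∫ y, cdf (gaussianReal 0 1) ((x - a * y) / b) ∂gaussianReal 0 1
      = ∫ y, cdf (gaussianReal 0 (.mk (b ^ 2) (sq_nonneg b))) (x - a * y) ∂gaussianReal 0 1 := by
        simp_rw [← gaussianReal_zero_one_map_const_mul, cdf_map_const_mul _ hb]
    _ = ∫ y, cdf (gaussianReal 0 (.mk (b ^ 2) (sq_nonneg b))) (x - y)
          ∂gaussianReal 0 (.mk (a ^ 2) (sq_nonneg a)) := by
        rw [← gaussianReal_zero_one_map_const_mul a, integral_map (by fun_prop)]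
        exact ((monotone_cdf _).measurable.comp (by fun_prop)).aestronglyMeasurable
    _ = cdf (gaussianReal 0 1) x := by
        rw [integral_cdf_sub_eq_cdf_conv, h_conv]

lemma stdCdf_eq_cdf_gaussianReal : stdCdf = cdf (gaussianReal 0 1) := by
  ext t
  have h_pdf : stdPdf = gaussianPDFReal 0 1 := by
    ext u
    simp [stdPdf, gauss, gaussianPDFReal]
  rw [cdf_eq_real, measureReal_def, gaussianReal_apply_eq_integral _ one_ne_zero,
    ENNReal.toReal_ofReal (setIntegral_nonneg measurableSet_Iic fun u _ =>
      gaussianPDFReal_nonneg 0 1 u), stdCdf, h_pdf]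

lemma integral_gauss_mul_eq_integral_gaussianReal (m : ℝ) {s : ℝ} (hs : 0 < s) (f : ℝ → ℝ) :
    ∫ y, gauss m (s ^ 2) y * f y = ∫ u, f (m + s * u) ∂gaussianReal 0 1 := by
  have h_map : (gaussianReal 0 1).map (fun u => m + s * u)
      = gaussianReal m (.mk (s ^ 2) (sq_nonneg s)) := by
    rw [← Function.comp_def (m + ·) (s * ·), ← Measure.map_map (measurable_const_add m)
      (measurable_const_mul s), gaussianReal_zero_one_map_const_mul, gaussianReal_map_const_add,
      zero_add]
  have h_emb : MeasurableEmbedding (fun u => m + s * u) :=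
    (measurableEmbedding_addLeft m).comp (measurableEmbedding_mulLeft₀ hs.ne')
  rw [← h_emb.integral_map, h_map, integral_gaussianReal_eq_integral_smul
    (v := .mk (s ^ 2) (sq_nonneg s)) (NNReal.coe_ne_zero.mp (pow_pos hs 2).ne')]
  rfl

theorem stmt_11 (μ σx σn fstar : ℝ) (hσx : 0 < σx) (hσn : 0 < σn) :
    (∫ y : ℝ, gauss μ (σx ^ 2 + σn ^ 2) y *
        (stdCdf (((σx ^ 2 + σn ^ 2) * fstar - σn ^ 2 * μ - σx ^ 2 * y) /
            (σx * σn * Real.sqrt (σx ^ 2 + σn ^ 2))) /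
          stdCdf ((fstar - μ) / σx))) = 1 := by
  set s := √(σx ^ 2 + σn ^ 2)
  have hs : 0 < s := by positivity
  have hs2 : s ^ 2 = σx ^ 2 + σn ^ 2 := sq_sqrt (by positivity)
  have h_std (u : ℝ) : (s ^ 2 * fstar - σn ^ 2 * μ - σx ^ 2 * (μ + s * u)) / (σx * σn * s)
      = ((fstar - μ) / σx - σx / s * u) / (σn / s) := by
    field_simp
    linear_combination μ * hs2
  rw [← hs2, integral_gauss_mul_eq_integral_gaussianReal μ hs]
  simp_rw [h_std, stdCdf_eq_cdf_gaussianReal]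
  rw [integral_div, integral_cdf_gaussianReal_affine (by positivity) (by field_simp; linarith),
    div_self (cdf_gaussianReal_pos 0 one_ne_zero _).ne']
end
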